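/- Let L be a closed subspace of ℝ^n (with Euclidean structure), S ⊆ L nonempty closed convex, and suppose the metric projection proj_S is differentiable at y. Then for each i, the i-th diagonal entry of the Jacobian of proj_S at y is at most the i-th diagonal entry of the matrix of the orthogonal projection onto L: ∂(proj_S y)ᵢ/∂yᵢ ≤ (P_L)ᵢᵢ. -/

import Mathlib

/-! The metric projection `f` onto a convex set is firmly nonexpansive,
`‖f x - f x'‖² ≤ ⟪x - x', f x - f x'⟫`. As `f x - f x'` lies in `L`, the right-hand side only sees
`P_L (x - x')`, and Cauchy–Schwarz upgrades this to `⟪x - x', f x - f x'⟫ ≤ ‖P_L (x - x')‖²`.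
With `x = y + t eᵢ`, `x' = y`, dividing by `t²` and letting `t → 0⁺` bounds `⟪eᵢ, D eᵢ⟫` by
`‖P_L eᵢ‖² = ⟪eᵢ, P_L eᵢ⟫`. -/

open InnerProductSpace

variable {E : Type*} [NormedAddCommGroup E] [InnerProductSpace ℝ E]

def IsMetricProjection (S : Set E) (f : E → E) : Prop :=
  ∀ x, f x ∈ S ∧ ∀ w ∈ S, ‖x - f x‖ ≤ ‖x - w‖

theorem Submodule.real_inner_le_norm_starProjection_sq {K : Submodule ℝ E}
    [K.HasOrthogonalProjection] {u v : E} (hu : u ∈ K) (h : ‖u‖ ^ 2 ≤ ⟪v, u⟫_ℝ) :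
    ⟪v, u⟫_ℝ ≤ ‖K.starProjection v‖ ^ 2 := by
  have hvu : ⟪v, u⟫_ℝ ≤ ‖K.starProjection v‖ * ‖u‖ :=
    calc ⟪v, u⟫_ℝ = ⟪K.starProjection v, u⟫_ℝ :=
          (K.inner_orthogonalProjectionOnto_eq_of_mem_right ⟨u, hu⟩ v).symm
      _ ≤ ‖K.starProjection v‖ * ‖u‖ := real_inner_le_norm _ _
  have hu_le : ‖u‖ ≤ ‖K.starProjection v‖ := by
    by_contra! hlt
    nlinarith [norm_nonneg (K.starProjection v)]
  nlinarith [norm_nonneg u, norm_nonneg (K.starProjection v)]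

theorem HasFDerivAt.apply_le_of_sub_le_mul {g : E → ℝ} {g' : E →L[ℝ] ℝ} {y : E}
    (hg : HasFDerivAt g g' y) {v : E} {c : ℝ}
    (h : ∀ t > 0, g (y + t • v) - g y ≤ t * c) : g' v ≤ c := by
  refine le_of_tendsto (hg.hasLineDerivAt v).tendsto_slope_zero_right ?_
  filter_upwards [self_mem_nhdsWithin] with t (ht : 0 < t)
  rw [smul_eq_mul, inv_mul_le_iff₀ ht]
  exact h t ht

namespace IsMetricProjection

variable {S : Set E} {f : E → E}

theorem inner_sub_le_zero (hf : IsMetricProjection S f) (hS : Convex ℝ S) (x : E) {w : E}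
    (hw : w ∈ S) : ⟪x - f x, w - f x⟫_ℝ ≤ 0 := by
  have : Nonempty S := ⟨⟨f x, (hf x).1⟩⟩
  have hinf : ‖x - f x‖ = ⨅ w : S, ‖x - w‖ :=
    le_antisymm (le_ciInf fun w => (hf x).2 w w.2)
      (ciInf_le (f := fun w : S => ‖x - w‖)
        ⟨0, Set.forall_mem_range.2 fun _ => norm_nonneg _⟩ ⟨f x, (hf x).1⟩)
  exact (norm_eq_iInf_iff_real_inner_le_zero hS (hf x).1).mp hinf w hw

theorem norm_sub_sq_le_inner (hf : IsMetricProjection S f) (hS : Convex ℝ S) (x x' : E) :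
    ‖f x - f x'‖ ^ 2 ≤ ⟪x - x', f x - f x'⟫_ℝ := by
  have h := add_nonpos (hf.inner_sub_le_zero hS x (hf x').1)
    (hf.inner_sub_le_zero hS x' (hf x).1)
  rw [← real_inner_self_eq_norm_sq]
  simp only [inner_sub_left, inner_sub_right, real_inner_comm] at h ⊢
  linarith

theorem inner_sub_le_norm_starProjection_sq (hf : IsMetricProjection S f) (hS : Convex ℝ S)
    {K : Submodule ℝ E} [K.HasOrthogonalProjection] (hSK : S ⊆ K) (x x' : E) :
    ⟪x - x', f x - f x'⟫_ℝ ≤ ‖K.starProjection (x - x')‖ ^ 2 :=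
  K.real_inner_le_norm_starProjection_sq (K.sub_mem (hSK (hf x).1) (hSK (hf x').1))
    (hf.norm_sub_sq_le_inner hS x x')

theorem inner_fderiv_apply_le_inner_starProjection (hf : IsMetricProjection S f)
    (hS : Convex ℝ S) {K : Submodule ℝ E} [K.HasOrthogonalProjection] (hSK : S ⊆ K)
    {D : E →L[ℝ] E} {y : E}
    (hD : HasFDerivAt f D y) (v : E) : ⟪v, D v⟫_ℝ ≤ ⟪v, K.starProjection v⟫_ℝ := by
  have hg : HasFDerivAt (fun z => ⟪v, f z⟫_ℝ) ((innerSL ℝ v).comp D) y :=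
    (innerSL ℝ v).hasFDerivAt.comp y hD
  have hPv : ⟪v, K.starProjection v⟫_ℝ = ‖K.starProjection v‖ ^ 2 := by
    rw [← real_inner_self_eq_norm_sq, K.inner_starProjection_left_eq_right,
      K.starProjection_eq_self_iff.mpr (K.starProjection_apply_mem v)]
  rw [hPv]
  refine hg.apply_le_of_sub_le_mul fun t ht => ?_
  have h := hf.inner_sub_le_norm_starProjection_sq hS hSK (y + t • v) y
  rw [add_sub_cancel_left, map_smul, norm_smul, Real.norm_of_nonneg ht.le,
    real_inner_smul_left] at h
  rw [← inner_sub_right]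
  nlinarith

end IsMetricProjection

theorem jacobian_diag_le_orthogonalProjection_diag_general
    {n : ℕ} (L : Submodule ℝ (EuclideanSpace ℝ (Fin n)))
    (S : Set (EuclideanSpace ℝ (Fin n))) (hSL : S ⊆ (L : Set (EuclideanSpace ℝ (Fin n))))
    (hSc : Convex ℝ S)
    (projS : EuclideanSpace ℝ (Fin n) → EuclideanSpace ℝ (Fin n))
    (hprojS : ∀ x, projS x ∈ S ∧ ∀ w ∈ S, ‖x - projS x‖ ≤ ‖x - w‖)
    (y : EuclideanSpace ℝ (Fin n))
    (D : EuclideanSpace ℝ (Fin n) →L[ℝ] EuclideanSpace ℝ (Fin n))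
    (hD : HasFDerivAt projS D y) (i : Fin n) :
    D (EuclideanSpace.single i 1) i
      ≤ (Submodule.orthogonalProjection L (EuclideanSpace.single i 1) : EuclideanSpace ℝ (Fin n)) i := by
  simpa only [EuclideanSpace.inner_single_left, map_one, one_mul,
    Submodule.starProjection_apply] using
    IsMetricProjection.inner_fderiv_apply_le_inner_starProjection hprojS hSc hSL hD
      (EuclideanSpace.single i 1)

/-- If S is a nonempty closed convex subset of a closed subspace
L of ℝⁿ and the metric projection onto S is differentiable at y, then each
diagonal Jacobian entry of proj_S at y is at most the corresponding diagonal
entry of the orthogonal projection matrix onto L. -/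
theorem jacobian_diag_le_orthogonalProjection_diag
    {n : ℕ} (L : Submodule ℝ (EuclideanSpace ℝ (Fin n)))
    (S : Set (EuclideanSpace ℝ (Fin n))) (hSL : S ⊆ (L : Set (EuclideanSpace ℝ (Fin n))))
    (hSc : Convex ℝ S) (hScl : IsClosed S) (hSne : S.Nonempty)
    (projS : EuclideanSpace ℝ (Fin n) → EuclideanSpace ℝ (Fin n))
    (hprojS : ∀ x, projS x ∈ S ∧ ∀ w ∈ S, ‖x - projS x‖ ≤ ‖x - w‖)
    (y : EuclideanSpace ℝ (Fin n))
    (D : EuclideanSpace ℝ (Fin n) →L[ℝ] EuclideanSpace ℝ (Fin n))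
    (hD : HasFDerivAt projS D y) (i : Fin n) :
    D (EuclideanSpace.single i 1) i
      ≤ (Submodule.orthogonalProjection L (EuclideanSpace.single i 1) : EuclideanSpace ℝ (Fin n)) i :=
  jacobian_diag_le_orthogonalProjection_diag_general L S hSL hSc projS hprojS y D hD i
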